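/- arXiv:1205.2079 — 3 statements merged into one kernel-verified Lean document; each statement's English description precedes it below -/
import Mathlib

section
/- Let G be a group of diagonal type with socle T^k, and let t_1,…,t_k ∈ T be such that at least two of the t_i equal the identity, at least one t_i is non-trivial, and the non-trivial t_i are pairwise distinct. If (α,…,α)π ∈ G fixes D(φ_{t_1},…,φ_{t_k}) ∈ Ω(k,T), then t_i α = t_{iπ} for all i ∈ {1,…,k}. -/
/-!
Common setup for groups of diagonal type, following Fawcett,
"The base size of a primitive diagonal group".
-/

namespace Diag

variable (T : Type) [Group T] (k : ℕ)

/-- The permutation action of `S_k` on `k`-tuples of automorphisms of `T`,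
as a homomorphism into the automorphism group of `Fin k → MulAut T`;
this is the datum defining the wreath product `Aut(T) ≀ S_k`. -/
def permAction : Equiv.Perm (Fin k) →* MulAut (Fin k → MulAut T) where
  toFun π :=
    { toFun := fun f => f ∘ π.symm
      invFun := fun f => f ∘ π
      left_inv := fun f => by ext i; simp
      right_inv := fun f => by ext i; simp
      map_mul' := fun f g => rfl }
  map_one' := by ext f i; rfl
  map_mul' := fun π σ => by ext f i; rfl

@[simp] lemma permAction_apply (π : Equiv.Perm (Fin k)) (f : Fin k → MulAut T) (i : Fin k) :
    permAction T k π f i = f (π.symm i) := rfl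

/-- The wreath product `Aut(T) ≀_k S_k`. -/
abbrev Wr := SemidirectProduct (Fin k → MulAut T) (Equiv.Perm (Fin k)) (permAction T k)

/-- `Inn(T)`, the group of inner automorphisms, as a subgroup of `Aut(T)`. -/
def Inn : Subgroup (MulAut T) := (MulAut.conj : T →* MulAut T).range

instance : (Inn T).Normal := by
  constructor
  rintro n ⟨t, rfl⟩ g
  refine ⟨g t, ?_⟩
  ext x
  simp [MulAut.conj_apply, map_mul, map_inv]

/-- `W(k,T) = {(α₁,…,α_k)π ∈ Aut(T) ≀ S_k : α₁Inn(T) = α_iInn(T) for all i}`. -/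
def Wgrp : Subgroup (Wr T k) where
  carrier := {w | ∀ i j, (w.left i)⁻¹ * w.left j ∈ Inn T}
  one_mem' := by
    intro i j
    simp only [SemidirectProduct.one_left, Pi.one_apply, inv_one, one_mul]
    exact (Inn T).one_mem
  mul_mem' := by
    intro a b ha hb i j
    have key : ((a * b).left i)⁻¹ * (a * b).left j
        = (b.left (a.right.symm i))⁻¹ * ((a.left i)⁻¹ * a.left j) * (b.left (a.right.symm i))
          * ((b.left (a.right.symm i))⁻¹ * b.left (a.right.symm j)) := by
      simp only [SemidirectProduct.mul_left, Pi.mul_apply, permAction_apply]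
      group
    rw [key]
    exact mul_mem (Subgroup.Normal.conj_mem' (inferInstance : (Inn T).Normal) _ (ha i j) _) (hb _ _)
  inv_mem' := by
    intro a ha i j
    have key : ((a⁻¹).left i)⁻¹ * (a⁻¹).left j
        = a.left (a.right i) * ((a.left (a.right i))⁻¹ * a.left (a.right j))⁻¹
          * (a.left (a.right i))⁻¹ := by
      simp only [SemidirectProduct.inv_left, Pi.inv_apply, permAction_apply]
      have h1 : (a.right⁻¹).symm = a.right := by ext x; rfl
      rw [h1]
      group
    rw [key]
    exact Subgroup.Normal.conj_mem (inferInstance : (Inn T).Normal) _ (inv_mem (ha _ _)) _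

/-- `D(k,T) = {(α,…,α)π ∈ Aut(T) ≀ S_k}`, as a subgroup of the wreath product. -/
def Dgrp : Subgroup (Wr T k) where
  carrier := {w | ∀ i j, w.left i = w.left j}
  one_mem' := fun _ _ => rfl
  mul_mem' := by
    intro a b ha hb i j
    simp only [SemidirectProduct.mul_left, Pi.mul_apply, permAction_apply]
    rw [ha i j, hb (a.right.symm i) (a.right.symm j)]
  inv_mem' := by
    intro a ha i j
    simp only [SemidirectProduct.inv_left, Pi.inv_apply, permAction_apply]
    rw [ha ((a.right⁻¹).symm i) ((a.right⁻¹).symm j)]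

/-- `D(k,T)` viewed as a subgroup of `W(k,T)`. -/
def Dsub : Subgroup ↥(Wgrp T k) := (Dgrp T k).subgroupOf (Wgrp T k)

/-- `Ω(k,T)`, the coset space of `D(k,T)` in `W(k,T)`, on which `W(k,T)` acts
faithfully by multiplication. -/
abbrev Om := ↥(Wgrp T k) ⧸ Dsub T k

/-- For `t ∈ T`, the inner automorphism `φ_t : s ↦ t⁻¹st`. -/
def phi (t : T) : MulAut T := MulAut.conj t⁻¹

/-- The element `(φ_{t₁},…,φ_{t_k})` of `W(k,T)` determined by a tuple `t`. -/
def innW (t : Fin k → T) : ↥(Wgrp T k) :=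
  ⟨⟨fun i => phi T (t i), 1⟩, fun i j =>
    mul_mem (inv_mem (MonoidHom.mem_range.mpr ⟨(t i)⁻¹, rfl⟩))
      (MonoidHom.mem_range.mpr ⟨(t j)⁻¹, rfl⟩)⟩

/-- The point `D(φ_{t₁},…,φ_{t_k})` of `Ω(k,T)`. -/
def pointOf (t : Fin k → T) : Om T k := QuotientGroup.mk (innW T k t)

/-- The point `D = D(k,T)` of `Ω(k,T)` (the trivial coset). -/
def pt : Om T k := QuotientGroup.mk 1

/-- The diagonal element `(α,…,α)π` of `W(k,T)`. -/
def diagElt (α : MulAut T) (π : Equiv.Perm (Fin k)) : ↥(Wgrp T k) :=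
  ⟨⟨fun _ => α, π⟩, fun _ _ => by
    show α⁻¹ * α ∈ Inn T
    rw [inv_mul_cancel]; exact (Inn T).one_mem⟩

/-- The top group `P_G ≤ S_k` of a subgroup `G ≤ W(k,T)`: all permutations `π`
such that `(α₁,…,α_k)π ∈ G` for some automorphisms `α_i`. -/
def topGroup (G : Subgroup ↥(Wgrp T k)) : Subgroup (Equiv.Perm (Fin k)) :=
  Subgroup.map ((SemidirectProduct.rightHom).comp (Wgrp T k).subtype) G

/-- The subgroup `Inn(T)^k ⋊ S_k` of `W(k,T)`: all `(α₁,…,α_k)π` with every `α_i` inner. -/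
def InnSym : Subgroup ↥(Wgrp T k) where
  carrier := {w | ∀ i, (w : Wr T k).left i ∈ Inn T}
  one_mem' := fun _ => (Inn T).one_mem
  mul_mem' := by
    intro a b ha hb i
    show ((a : Wr T k) * b).left i ∈ Inn T
    rw [SemidirectProduct.mul_left]
    simp only [Pi.mul_apply, permAction_apply]
    exact mul_mem (ha i) (hb _)
  inv_mem' := by
    intro a ha i
    show ((a : Wr T k)⁻¹).left i ∈ Inn T
    rw [SemidirectProduct.inv_left]
    simp only [Pi.inv_apply, permAction_apply]
    exact inv_mem (ha _)

/-- The socle `Inn(T)^k` (that is, `T^k`) as a subgroup of `W(k,T)`. -/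
def InnK : Subgroup ↥(Wgrp T k) :=
  InnSym T k ⊓ Subgroup.comap ((SemidirectProduct.rightHom).comp (Wgrp T k).subtype) ⊥

/-- The subgroup `Inn(T)^k ⋊ A_k` of `W(k,T)`. -/
def InnAlt : Subgroup ↥(Wgrp T k) :=
  InnSym T k ⊓ Subgroup.comap ((SemidirectProduct.rightHom).comp (Wgrp T k).subtype)
    (alternatingGroup (Fin k))

/-- The subgroup `A(k,T) ⋊ P` of `W(k,T)`, for `P ≤ S_k`: all elements of
`W(k,T)` whose permutation part lies in `P`. -/
def AP (P : Subgroup (Equiv.Perm (Fin k))) : Subgroup ↥(Wgrp T k) :=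
  Subgroup.comap ((SemidirectProduct.rightHom).comp (Wgrp T k).subtype) P

/-- `B ⊆ Ω(k,T)` is a base for `G ≤ W(k,T)`: only the identity of `G`
fixes every point of `B`. -/
def IsBase (G : Subgroup ↥(Wgrp T k)) (B : Set (Om T k)) : Prop :=
  ∀ g ∈ G, (∀ ω ∈ B, g • ω = ω) → g = 1

/-- `b(G)`: the minimal size of a base for `G` acting on `Ω(k,T)`. -/
noncomputable def baseSize (G : Subgroup ↥(Wgrp T k)) : ℕ :=
  sInf {n | ∃ B : Finset (Om T k), B.card = n ∧ IsBase T k G ↑B}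

/-- `G ≤ W(k,T)` acts primitively on `Ω(k,T)`: the action is transitive and
every block is trivial. -/
def IsPrimitive (G : Subgroup ↥(Wgrp T k)) : Prop :=
  (∀ ω₁ ω₂ : Om T k, ∃ g ∈ G, g • ω₁ = ω₂) ∧
  ∀ B : Set (Om T k),
    (∀ g ∈ G, (g • ·) '' B = B ∨ Disjoint ((g • ·) '' B) B) →
    B.Subsingleton ∨ B = Set.univ

/-- `G` is a group of diagonal type with socle `T^k`:
`Inn(T)^k ≤ G ≤ W(k,T)` and `G` acts primitively on `Ω(k,T)`. -/
def IsDiagonalType (G : Subgroup ↥(Wgrp T k)) : Prop :=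
  InnK T k ≤ G ∧ IsPrimitive T k G

/-- A subgroup `P ≤ S_k` is primitive in its natural action on `{1,…,k}`:
the action is transitive and every block is trivial. -/
def PermPrimitive (P : Subgroup (Equiv.Perm (Fin k))) : Prop :=
  (∀ i j : Fin k, ∃ π ∈ P, π i = j) ∧
  ∀ B : Set (Fin k),
    (∀ π ∈ P, (π : Fin k → Fin k) '' B = B ∨ Disjoint ((π : Fin k → Fin k) '' B) B) →
    B.Subsingleton ∨ B = Set.univ

end Diag

/-!
With `w = (φ_{t₁},…,φ_{t_k})`, fixing `Dw` means `w⁻¹ ((α,…,α)π)⁻¹ w ∈ D`: its components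
`φ_{t_i}⁻¹ α⁻¹ φ_{t_{iπ}}` do not depend on `i`, i.e. `φ_{t_{iπ}} = α φ_{t_i} β` for one
automorphism `β`. As `Z(T) = 1`, `t ↦ φ_t` is injective. Two trivial entries `t_a = t_b = 1`
give `t_{aπ} = t_{bπ}`, which by distinctness forces `t_{aπ} = 1`; hence `β = α⁻¹`, and then
`φ_{t_{iπ}} = α φ_{t_i} α⁻¹ = φ_{t_iα}`.
-/

theorem IsSimpleGroup.center_eq_bot {G : Type*} [Group G] [IsSimpleGroup G]
    (h : ∃ a b : G, a * b ≠ b * a) : Subgroup.center G = ⊥ := by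
  refine (Subgroup.center G).normal_of_characteristic.eq_bot_or_eq_top.resolve_right ?_
  intro htop
  obtain ⟨a, b, hab⟩ := h
  exact hab (Subgroup.mem_center_iff.mp (htop ▸ Subgroup.mem_top a) b).symm

theorem MulAut.conj_injective_of_center_eq_bot {G : Type*} [Group G]
    (h : Subgroup.center G = ⊥) : Function.Injective (MulAut.conj : G →* MulAut G) := by
  refine (injective_iff_map_eq_one _).mpr fun g hg => ?_
  rw [← Subgroup.mem_bot, ← h, Subgroup.mem_center_iff]
  intro s
  have hs : g * s * g⁻¹ = s := by simpa using DFunLike.congr_fun hg s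
  exact (mul_inv_eq_iff_eq_mul.mp hs).symm

namespace Diag

variable {T : Type} [Group T]

theorem phi_injective (h : Subgroup.center T = ⊥) : Function.Injective (phi T) :=
  fun _ _ hab => inv_injective (MulAut.conj_injective_of_center_eq_bot h hab)

@[simp] theorem phi_one : phi T 1 = 1 := by
  simp [phi]

theorem mul_phi_mul_inv (α : MulAut T) (t : T) : α * phi T t * α⁻¹ = phi T (α t) := by
  ext s
  simp [phi, map_mul, map_inv]

variable {k : ℕ}

@[simp] theorem permAction_symm_apply (π : Equiv.Perm (Fin k)) (f : Fin k → MulAut T)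
    (i : Fin k) : (permAction T k π).symm f i = f (π i) := rfl

theorem exists_phi_perm_eq_of_smul_pointOf_eq {α : MulAut T} {π : Equiv.Perm (Fin k)}
    {t : Fin k → T} (hfix : diagElt T k α π • pointOf T k t = pointOf T k t) :
    ∃ β : MulAut T, ∀ i, phi T (t (π i)) = α * phi T (t i) * β := by
  have hD : ∀ i j, (phi T (t i))⁻¹ * α⁻¹ * phi T (t (π i))
      = (phi T (t j))⁻¹ * α⁻¹ * phi T (t (π j)) := by
    have hmem := QuotientGroup.eq.mp hfix
    rw [Dsub, Subgroup.mem_subgroupOf] at hmem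
    intro i j
    simpa [diagElt, innW, mul_assoc] using hmem i j
  rcases isEmpty_or_nonempty (Fin k) with _ | ⟨⟨j⟩⟩
  · exact ⟨1, isEmptyElim⟩
  refine ⟨(phi T (t j))⁻¹ * α⁻¹ * phi T (t (π j)), fun i => ?_⟩
  rw [← hD i j]
  group

end Diag

open Diag

theorem fix_point_of_distinct_entries_general
    (T : Type) [Group T] [IsSimpleGroup T]
    (hab : ∃ a b : T, a * b ≠ b * a)
    (k : ℕ)
    (t : Fin k → T)
    (htwo : ∃ i j : Fin k, i ≠ j ∧ t i = 1 ∧ t j = 1)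
    (hdist : ∀ i j : Fin k, i ≠ j → t i ≠ 1 → t j ≠ 1 → t i ≠ t j)
    (α : MulAut T) (π : Equiv.Perm (Fin k))
    (hfix : diagElt T k α π • pointOf T k t = pointOf T k t) :
    ∀ i, α (t i) = t (π i) := by
  have hphi := phi_injective (IsSimpleGroup.center_eq_bot hab)
  obtain ⟨β, hβ⟩ := exists_phi_perm_eq_of_smul_pointOf_eq hfix
  obtain ⟨a, b, hne, ha, hb⟩ := htwo
  have hπab : t (π a) = t (π b) := hphi (by rw [hβ, hβ, ha, hb])
  -- a non-trivial entry of `t` cannot repeat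
  have hπa : t (π a) = 1 := by
    by_contra h
    exact hdist _ _ (π.injective.ne hne) h (hπab ▸ h) hπab
  have hβα : β = α⁻¹ := by
    have h := hβ a
    rw [ha, hπa, phi_one, mul_one] at h
    exact (inv_eq_of_mul_eq_one_right h.symm).symm
  intro i
  exact hphi (by rw [← mul_phi_mul_inv, hβ i, hβα])

/-- **Lemma (distinct entries).** Let `t₁,…,t_k ∈ T` be such that at least two of the
`t_i` are trivial, at least one is non-trivial, and the non-trivial `t_i` are pairwise
distinct.  If `(α,…,α)π ∈ G` fixes `D(φ_{t₁},…,φ_{t_k})`, then `t_iα = t_{iπ}` for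
all `i`. -/
theorem fix_point_of_distinct_entries
    (T : Type) [Group T] [Fintype T] [IsSimpleGroup T]
    (hab : ∃ a b : T, a * b ≠ b * a)
    (k : ℕ) (hk : 2 ≤ k)
    (G : Subgroup ↥(Wgrp T k)) (hG : IsDiagonalType T k G)
    (t : Fin k → T)
    (htwo : ∃ i j : Fin k, i ≠ j ∧ t i = 1 ∧ t j = 1)
    (hone : ∃ i, t i ≠ 1)
    (hdist : ∀ i j : Fin k, i ≠ j → t i ≠ 1 → t j ≠ 1 → t i ≠ t j)
    (α : MulAut T) (π : Equiv.Perm (Fin k))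
    (hmem : diagElt T k α π ∈ G)
    (hfix : diagElt T k α π • pointOf T k t = pointOf T k t) :
    ∀ i, α (t i) = t (π i) :=
  fix_point_of_distinct_entries_general T hab k t htwo hdist α π hfix
end

section
/- Let G be a group of diagonal type with socle T^k. Suppose T = ⟨x, y⟩ where x and y have different orders, suppose k ≥ 4 and the top group P_G is not S_k, and let T(x,y) denote the set of non-trivial elements of T whose order differs from the orders of both x and y. If P_G has a base of size at most |T(x,y)| + 2 in its natural action on {1,…,k}, then b(G) = 2. -/
open Diag

section Aux

open Diag

variable {T : Type} [Group T]

lemma DiagAux.center_eq_bot [IsSimpleGroup T] (hab : ∃ a b : T, a * b ≠ b * a) :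
    Subgroup.center T = ⊥ := by
  rcases IsSimpleGroup.eq_bot_or_eq_top_of_normal (Subgroup.center T) inferInstance with h | h
  · exact h
  · obtain ⟨a, b, hab'⟩ := hab
    exact absurd ((Subgroup.mem_center_iff.mp
      (by rw [h]; exact Subgroup.mem_top a : a ∈ Subgroup.center T)) b).symm hab'

lemma DiagAux.conj_inj [IsSimpleGroup T] (hab : ∃ a b : T, a * b ≠ b * a)
    {u v : T} (h : (MulAut.conj u : MulAut T) = MulAut.conj v) : u = v := by
  have hc := DiagAux.center_eq_bot hab
  have hmem : v⁻¹ * u ∈ Subgroup.center T := by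
    rw [Subgroup.mem_center_iff]
    intro g
    have h1 : u * g * u⁻¹ = v * g * v⁻¹ := by
      have := DFunLike.congr_fun h g
      simpa [MulAut.conj_apply] using this
    have h2 := congrArg (fun z => v⁻¹ * z * u) h1
    simp only [mul_assoc, inv_mul_cancel_left, inv_mul_cancel, mul_one] at h2
    simp [mul_assoc, ← h2]
  rw [hc, Subgroup.mem_bot] at hmem
  have := inv_mul_eq_one.mp hmem
  exact this.symm

lemma DiagAux.comm_of_mem_closure_singleton (u a b : T)
    (ha : a ∈ Subgroup.closure ({u} : Set T)) (hb : b ∈ Subgroup.closure ({u} : Set T)) :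
    a * b = b * a := by
  rw [Subgroup.mem_closure_singleton] at ha hb
  obtain ⟨m, rfl⟩ := ha; obtain ⟨n, rfl⟩ := hb
  rw [← zpow_add, ← zpow_add, add_comm]

@[simp] lemma DiagAux.permAction_inv_apply {k : ℕ} (π : Equiv.Perm (Fin k))
    (f : Fin k → MulAut T) (i : Fin k) :
    (permAction T k π)⁻¹ f i = f (π i) := by
  rw [← map_inv, permAction_apply, Equiv.Perm.inv_def, Equiv.symm_symm]

lemma DiagAux.phi_inv (w : T) : (phi T w)⁻¹ = phi T w⁻¹ := by
  unfold phi
  rw [← map_inv, inv_inv]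

lemma DiagAux.key_eq [IsSimpleGroup T] (hab : ∃ a b : T, a * b ≠ b * a) (α : MulAut T)
    (a u b v : T)
    (h : (phi T a)⁻¹ * α * phi T u = (phi T b)⁻¹ * α * phi T v) :
    a * (α u)⁻¹ = b * (α v)⁻¹ := by
  have key : ∀ (w z : T), (phi T w)⁻¹ * α * phi T z = MulAut.conj (w * (α z)⁻¹) * α := by
    intro w z
    ext q
    have h1 : ((phi T w)⁻¹ * α * phi T z) q = (phi T w)⁻¹ (α (phi T z q)) := rfl
    have h2 : (MulAut.conj (w * (α z)⁻¹) * α) q = MulAut.conj (w * (α z)⁻¹) (α q) := rfl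
    rw [h1, h2, DiagAux.phi_inv]
    show MulAut.conj w⁻¹⁻¹ (α (MulAut.conj z⁻¹ q)) = _
    rw [inv_inv, MulAut.conj_apply, MulAut.conj_apply, MulAut.conj_apply]
    rw [map_mul, map_mul, map_inv]
    group
  rw [key, key] at h
  exact DiagAux.conj_inj hab (mul_right_cancel h)

lemma DiagAux.perm_fix_all_but_two {k : ℕ} (π : Equiv.Perm (Fin k)) (A B : Fin k)
    (hAB : A ≠ B) (hfix : ∀ i, i ≠ A → i ≠ B → π i = i) :
    π = 1 ∨ π = Equiv.swap A B := by
  have hA : π A = A ∨ π A = B := by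
    by_contra hcon
    push_neg at hcon
    have h1 : π (π A) = π A := hfix (π A) hcon.1 hcon.2
    exact hcon.1 (π.injective h1)
  have hB : π B = A ∨ π B = B := by
    by_contra hcon
    push_neg at hcon
    have h1 : π (π B) = π B := hfix (π B) hcon.1 hcon.2
    exact hcon.2 (π.injective h1)
  rcases hA with hA | hA
  · left
    rcases hB with hB | hB
    · exact absurd (π.injective (hB.trans hA.symm)) (fun h => hAB h.symm)
    · apply Equiv.ext; intro i
      simp only [Equiv.Perm.one_apply]
      by_cases hiA : i = A
      · subst hiA; exact hA
      by_cases hiB : i = B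
      · subst hiB; exact hB
      · exact hfix i hiA hiB
  · right
    rcases hB with hB | hB
    · apply Equiv.ext; intro i
      by_cases hiA : i = A
      · subst hiA; rw [hA, Equiv.swap_apply_left]
      by_cases hiB : i = B
      · subst hiB; rw [hB, Equiv.swap_apply_right]
      · rw [hfix i hiA hiB, Equiv.swap_apply_of_ne_of_ne hiA hiB]
    · exact absurd (π.injective (hA.trans hB.symm)) hAB

lemma DiagAux.conj_left {k : ℕ} (w g : Wr T k) (hw : w.right = 1) (i : Fin k) :
    (w⁻¹ * g * w).left i = (w.left i)⁻¹ * g.left i * w.left (g.right.symm i) := by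
  simp [SemidirectProduct.mul_left, SemidirectProduct.inv_left, SemidirectProduct.mul_right,
    SemidirectProduct.inv_right, hw, permAction_apply]

lemma DiagAux.conj_right {k : ℕ} (w g : Wr T k) (hw : w.right = 1) :
    (w⁻¹ * g * w).right = g.right := by
  simp [SemidirectProduct.mul_right, SemidirectProduct.inv_right, hw]

lemma DiagAux.conj_left' {k : ℕ} (g n : Wr T k) (hn : n.right = 1) (i : Fin k) :
    (g * n * g⁻¹).left i = g.left i * n.left (g.right.symm i) * (g.left i)⁻¹ := by
  simp [SemidirectProduct.mul_left, SemidirectProduct.inv_left, SemidirectProduct.mul_right,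
    SemidirectProduct.inv_right, hn, permAction_apply]


lemma DiagAux.conj_right' {k : ℕ} (g n : Wr T k) (hn : n.right = 1) :
    (g * n * g⁻¹).right = 1 := by
  simp [SemidirectProduct.mul_right, SemidirectProduct.inv_right, hn]

lemma DiagAux.innW_mem_InnK (k : ℕ) (t : Fin k → T) : innW T k t ∈ InnK T k := by
  constructor
  · intro i
    exact MonoidHom.mem_range.mpr ⟨(t i)⁻¹, rfl⟩
  · show SemidirectProduct.rightHom ((innW T k t : ↥(Wgrp T k)) : Wr T k) ∈ (⊥ : Subgroup (Equiv.Perm (Fin k)))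
    simp [innW, Subgroup.mem_bot]

lemma DiagAux.InnK_normal (k : ℕ) : (InnK T k).Normal := by
  constructor
  intro n hn g
  obtain ⟨hn1, hn2⟩ := hn
  have hnr : ((n : ↥(Wgrp T k)) : Wr T k).right = 1 := by
    simpa [Subgroup.mem_bot] using hn2
  have hcoe : ((g * n * g⁻¹ : ↥(Wgrp T k)) : Wr T k)
      = (g : Wr T k) * (n : Wr T k) * (g : Wr T k)⁻¹ := rfl
  constructor
  · intro i
    show ((g * n * g⁻¹ : ↥(Wgrp T k)) : Wr T k).left i ∈ Inn T
    rw [hcoe, DiagAux.conj_left' _ _ hnr]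
    have := (inferInstance : (Inn T).Normal)
    exact this.conj_mem _ (hn1 _) _
  · show SemidirectProduct.rightHom ((g * n * g⁻¹ : ↥(Wgrp T k)) : Wr T k)
      ∈ (⊥ : Subgroup (Equiv.Perm (Fin k)))
    rw [Subgroup.mem_bot]
    show ((g * n * g⁻¹ : ↥(Wgrp T k)) : Wr T k).right = 1
    rw [hcoe]
    exact DiagAux.conj_right' _ _ hnr

lemma DiagAux.smul_mk_eq_iff {G : Type*} [Group G] (H : Subgroup G) (g w : G) :
    g • (QuotientGroup.mk w : G ⧸ H) = QuotientGroup.mk w ↔ w⁻¹ * g * w ∈ H := by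
  rw [MulAction.Quotient.smul_mk, smul_eq_mul, QuotientGroup.eq]
  constructor
  · intro h
    have h2 := inv_mem h
    simpa [mul_assoc, mul_inv_rev] using h2
  · intro h
    have h2 := inv_mem h
    simpa [mul_assoc, mul_inv_rev] using h2

end Aux

/-- **Lemma (top base 2).** Suppose `T = ⟨x,y⟩` with `x`, `y` of different orders,
`k ≥ 4` and `P_G ≠ S_k`.  If `P_G` has a base of size at most `|T(x,y)| + 2` in its
action on `{1,…,k}`, where `T(x,y)` is the set of non-trivial elements of `T` whose
order differs from those of `x` and `y`, then `b(G) = 2`. -/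
theorem base_two_of_top_base
    (T : Type) [Group T] [Fintype T] [IsSimpleGroup T]
    (hab : ∃ a b : T, a * b ≠ b * a)
    (k : ℕ) (hk2 : 2 ≤ k)
    (G : Subgroup ↥(Wgrp T k)) (hG : IsDiagonalType T k G)
    (x y : T) (hgen : Subgroup.closure {x, y} = (⊤ : Subgroup T))
    (hord : orderOf x ≠ orderOf y)
    (hk : 4 ≤ k) (hS : topGroup T k G ≠ ⊤)
    (hbase : ∃ s : Finset (Fin k),
      s.card ≤ Nat.card {t : T // t ≠ 1 ∧ orderOf t ≠ orderOf x ∧ orderOf t ≠ orderOf y} + 2 ∧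
      ∀ π ∈ topGroup T k G, (∀ i ∈ s, π i = i) → π = 1) :
    baseSize T k G = 2 := by
  classical
  obtain ⟨GinnK, -⟩ := hG
  obtain ⟨a0, b0, hab0⟩ := hab
  have hab' : ∃ a b : T, a * b ≠ b * a := ⟨a0, b0, hab0⟩
  have hphiinj : ∀ u v : T, phi T u = phi T v → u = v := by
    intro u v h
    exact inv_injective (DiagAux.conj_inj hab' h)
  have hphi1 : phi T (1 : T) = 1 := by
    unfold phi; rw [inv_one, map_one]
  have hxy : x ≠ y := fun h => hord (by rw [h])
  have ha0 : a0 ≠ 1 := by rintro rfl; exact hab0 (by rw [one_mul, mul_one])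
  have hx1 : x ≠ 1 := by
    rintro rfl
    refine hab0 (DiagAux.comm_of_mem_closure_singleton y a0 b0 ?_ ?_) <;>
    · have hle : Subgroup.closure ({1, y} : Set T) ≤ Subgroup.closure ({y} : Set T) := by
        rw [Subgroup.closure_le]
        rintro z (rfl | rfl)
        · exact one_mem _
        · exact Subgroup.subset_closure rfl
      exact hle (by rw [hgen]; exact Subgroup.mem_top _)
  have hy1 : y ≠ 1 := by
    rintro rfl
    refine hab0 (DiagAux.comm_of_mem_closure_singleton x a0 b0 ?_ ?_) <;>
    · have hle : Subgroup.closure ({x, 1} : Set T) ≤ Subgroup.closure ({x} : Set T) := by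
        rw [Subgroup.closure_le]
        rintro z (rfl | rfl)
        · exact Subgroup.subset_closure rfl
        · exact one_mem _
      exact hle (by rw [hgen]; exact Subgroup.mem_top _)
  have hk0 : 0 < k := by omega
  set n0 : ↥(Wgrp T k) := innW T k (fun _ => a0) with hn0def
  have hn0mem : n0 ∈ InnK T k := DiagAux.innW_mem_InnK k _
  have hn0G : n0 ∈ G := GinnK hn0mem
  have hn0D : (n0 : Wr T k) ∈ Dgrp T k := fun i j => rfl
  have hn0ne : n0 ≠ 1 := by
    intro h
    have h1 : ((n0 : Wr T k)).left ⟨0, hk0⟩ = 1 := by rw [h]; rfl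
    have h2 : phi T a0 = 1 := h1
    exact ha0 (hphiinj a0 1 (by rw [h2, hphi1]))
  -- lower bound: any base has size ≥ 2
  have hS0 : ∀ B : Finset (Om T k), IsBase T k G ↑B → 2 ≤ B.card := by
    intro B hB
    by_contra hlt
    push_neg at hlt
    have hcases : B.card = 0 ∨ B.card = 1 := by omega
    rcases hcases with h0 | h1
    · have hBe := Finset.card_eq_zero.mp h0
      rw [hBe] at hB
      apply hn0ne
      apply hB n0 hn0G
      intro ω hω
      simp at hω
    · obtain ⟨ω, rfl⟩ := Finset.card_eq_one.mp h1
      obtain ⟨w, rfl⟩ := QuotientGroup.mk_surjective ω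
      set g : ↥(Wgrp T k) := w * n0 * w⁻¹ with hgdef
      have hgG : g ∈ G := GinnK ((DiagAux.InnK_normal k).conj_mem n0 hn0mem w)
      have hgne : g ≠ 1 := by
        intro h
        apply hn0ne
        have h2 := congrArg (fun z => w⁻¹ * z * w) h
        simpa [hgdef, mul_assoc] using h2
      apply hgne
      apply hB g hgG
      intro ω hω
      have hω' : ω = QuotientGroup.mk w := by simpa using hω
      rw [hω', DiagAux.smul_mk_eq_iff]
      have hsimp : w⁻¹ * g * w = n0 := by rw [hgdef]; group
      rw [hsimp]
      exact Subgroup.mem_subgroupOf.mpr hn0D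
  -- construction of a base of size 2
  set m := Nat.card {t : T // t ≠ 1 ∧ orderOf t ≠ orderOf x ∧ orderOf t ≠ orderOf y} with hm
  obtain ⟨s, hs_card, hs_base⟩ := hbase
  have hPex : ∃ P : Finset (Fin k), P.card ≤ k - 2 ∧ P.card ≤ m + 2 ∧ 2 ≤ P.card ∧
      ∀ π ∈ topGroup T k G, (∀ i ∈ P, π i = i) → π = 1 := by
    by_cases hsk : s.card ≤ k - 2
    · by_cases hs2 : 2 ≤ s.card
      · exact ⟨s, hsk, hs_card, hs2, hs_base⟩
      · obtain ⟨P, hsub, -, hPcard⟩ := Finset.exists_subsuperset_card_eq s.subset_univ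
          (by omega : s.card ≤ 2)
          (by simpa [Finset.card_univ] using (by omega : 2 ≤ k))
        exact ⟨P, by omega, by omega, by omega, fun π hπ hfix => hs_base π hπ
          (fun i hi => hfix i (hsub hi))⟩
    · push_neg at hsk
      have hm2 : k ≤ m + 3 := by omega
      have hpair : ∃ A B : Fin k, A ≠ B ∧ Equiv.swap A B ∉ topGroup T k G := by
        by_contra hc
        push_neg at hc
        apply hS
        rw [eq_top_iff, ← Equiv.Perm.closure_isSwap, Subgroup.closure_le]
        rintro σ ⟨A, B, hAB, rfl⟩
        exact hc A B hAB
      obtain ⟨A, B, hAB, hswap⟩ := hpair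
      have hABcard : ({A, B} : Finset (Fin k)).card = 2 := Finset.card_pair hAB
      have hPcard : (Finset.univ \ {A, B} : Finset (Fin k)).card = k - 2 := by
        rw [Finset.card_sdiff_of_subset (Finset.subset_univ _), hABcard, Finset.card_univ,
          Fintype.card_fin]
      refine ⟨Finset.univ \ {A, B}, by omega, by omega, by omega, ?_⟩
      intro π hπ hfixP
      have hfix' : ∀ i, i ≠ A → i ≠ B → π i = i := by
        intro i hiA hiB
        exact hfixP i (by simp [hiA, hiB])
      rcases DiagAux.perm_fix_all_but_two π A B hAB hfix' with h | h
      · exact h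
      · exact absurd (h ▸ hπ) hswap
  obtain ⟨P, hPk, hPm, hP2, hPbase⟩ := hPex
  obtain ⟨e1, he1, e2, he2, hne12⟩ := Finset.one_lt_card.mp (by omega : 1 < P.card)
  set P2 := (P.erase e1).erase e2 with hP2def
  have he2' : e2 ∈ P.erase e1 := Finset.mem_erase.mpr ⟨fun h => hne12 h.symm, he2⟩
  have hP2card : P2.card = P.card - 2 := by
    rw [hP2def, Finset.card_erase_of_mem he2', Finset.card_erase_of_mem he1]
    omega
  have hP2mem : ∀ i, i ∈ P2 → i ≠ e1 ∧ i ≠ e2 ∧ i ∈ P := by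
    intro i hi
    rw [hP2def] at hi
    simp only [Finset.mem_erase] at hi
    exact ⟨hi.2.1, hi.1, hi.2.2⟩
  have hP2mem' : ∀ i, i ∈ P → i ≠ e1 → i ≠ e2 → i ∈ P2 := by
    intro i hi h1 h2
    rw [hP2def]
    exact Finset.mem_erase.mpr ⟨h2, Finset.mem_erase.mpr ⟨h1, hi⟩⟩
  have hmcard : Fintype.card {t : T // t ≠ 1 ∧ orderOf t ≠ orderOf x ∧ orderOf t ≠ orderOf y}
      = m := by
    rw [hm, Nat.card_eq_fintype_card]
  have hcardle : Fintype.card {i // i ∈ P2} ≤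
      Fintype.card {t : T // t ≠ 1 ∧ orderOf t ≠ orderOf x ∧ orderOf t ≠ orderOf y} := by
    rw [Fintype.card_coe, hmcard]
    omega
  obtain ⟨emb⟩ := Function.Embedding.nonempty_of_card_le hcardle
  set tt : Fin k → T := fun i =>
    if i = e1 then x else if i = e2 then y else if h : i ∈ P2 then (emb ⟨i, h⟩ : T) else 1
    with htt
  have htt1 : tt e1 = x := by simp [htt]
  have htt2 : tt e2 = y := by
    have h : e2 ≠ e1 := fun h => hne12 h.symm
    simp [htt, h]
  have httP2 : ∀ i (h : i ∈ P2), tt i = (emb ⟨i, h⟩ : T) := by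
    intro i h
    obtain ⟨h1, h2, -⟩ := hP2mem i h
    simp [htt, h1, h2, h]
  have httnot : ∀ i, i ∉ P → tt i = 1 := by
    intro i hi
    have h1 : i ≠ e1 := fun h => hi (h ▸ he1)
    have h2 : i ≠ e2 := fun h => hi (h ▸ he2)
    have h3 : i ∉ P2 := fun h => hi (hP2mem i h).2.2
    simp [htt, h1, h2, h3]
  have httprop : ∀ i, i ∈ P → tt i ≠ 1 := by
    intro i hi
    by_cases h1 : i = e1
    · rw [h1, htt1]; exact hx1
    by_cases h2 : i = e2
    · rw [h2, htt2]; exact hy1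
    · have hp2 := hP2mem' i hi h1 h2
      rw [httP2 i hp2]
      exact (emb ⟨i, hp2⟩).prop.1
  have htt_ne_one_iff : ∀ i, tt i ≠ 1 ↔ i ∈ P := by
    intro i
    constructor
    · intro h
      by_contra hc
      exact h (httnot i hc)
    · exact httprop i
  have horder : ∀ i, orderOf (tt i) = orderOf x → i = e1 := by
    intro i hoi
    have hne : tt i ≠ 1 := by
      intro h
      rw [h, orderOf_one] at hoi
      exact hx1 (orderOf_eq_one_iff.mp hoi.symm)
    have hiP : i ∈ P := (htt_ne_one_iff i).mp hne
    by_cases h1 : i = e1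
    · exact h1
    by_cases h2 : i = e2
    · rw [h2, htt2] at hoi
      exact absurd hoi.symm hord
    · have hp2 := hP2mem' i hiP h1 h2
      rw [httP2 i hp2] at hoi
      exact absurd hoi (emb ⟨i, hp2⟩).prop.2.1
  have horder' : ∀ i, orderOf (tt i) = orderOf y → i = e2 := by
    intro i hoi
    have hne : tt i ≠ 1 := by
      intro h
      rw [h, orderOf_one] at hoi
      exact hy1 (orderOf_eq_one_iff.mp hoi.symm)
    have hiP : i ∈ P := (htt_ne_one_iff i).mp hne
    by_cases h1 : i = e1
    · rw [h1, htt1] at hoi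
      exact absurd hoi hord
    by_cases h2 : i = e2
    · exact h2
    · have hp2 := hP2mem' i hiP h1 h2
      rw [httP2 i hp2] at hoi
      exact absurd hoi (emb ⟨i, hp2⟩).prop.2.2
  have htinj : ∀ i j, tt i ≠ 1 → tt i = tt j → i = j := by
    intro i j hne heq
    have hiP : i ∈ P := (htt_ne_one_iff i).mp hne
    have hjP : j ∈ P := (htt_ne_one_iff j).mp (heq ▸ hne)
    by_cases h1 : i = e1
    · have hoj : orderOf (tt j) = orderOf x := by rw [← heq, h1, htt1]
      exact h1.trans (horder j hoj).symm
    by_cases h2 : i = e2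
    · have hoj : orderOf (tt j) = orderOf y := by rw [← heq, h2, htt2]
      exact h2.trans (horder' j hoj).symm
    · have hip2 := hP2mem' i hiP h1 h2
      by_cases hj1 : j = e1
      · have hoi : orderOf (tt i) = orderOf x := by rw [heq, hj1, htt1]
        exact absurd (horder i hoi) h1
      by_cases hj2 : j = e2
      · have hoi : orderOf (tt i) = orderOf y := by rw [heq, hj2, htt2]
        exact absurd (horder' i hoi) h2
      · have hjp2 := hP2mem' j hjP hj1 hj2
        have hembeq : emb ⟨i, hip2⟩ = emb ⟨j, hjp2⟩ :=
          Subtype.ext (by rw [← httP2 i hip2, ← httP2 j hjp2, heq])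
        have := emb.injective hembeq
        simpa using this
  -- the two points are distinct
  have hptne : (pt T k : Om T k) ≠ pointOf T k tt := by
    intro h
    unfold pt pointOf at h
    rw [QuotientGroup.eq] at h
    have h' : innW T k tt ∈ Dsub T k := by simpa using h
    have h2 := Subgroup.mem_subgroupOf.mp h'
    have h3 : phi T (tt e1) = phi T (tt e2) := h2 e1 e2
    rw [htt1, htt2] at h3
    exact hxy (hphiinj x y h3)
  -- the base property
  have hBbase : IsBase T k G ↑({pt T k, pointOf T k tt} : Finset (Om T k)) := by
    intro g hgG hfixB
    have hfix1 : g • (pt T k) = pt T k := hfixB _ (by simp)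
    have hfix2 : g • (pointOf T k tt) = pointOf T k tt := hfixB _ (by simp)
    unfold pt at hfix1
    unfold pointOf at hfix2
    rw [DiagAux.smul_mk_eq_iff] at hfix1 hfix2
    have hgDsub : g ∈ Dsub T k := by simpa using hfix1
    have hDg := Subgroup.mem_subgroupOf.mp hgDsub
    set α : MulAut T := (g : Wr T k).left e1 with hα
    set π : Equiv.Perm (Fin k) := (g : Wr T k).right with hπ
    have hgleft : ∀ i, (g : Wr T k).left i = α := fun i => hDg i e1
    have hwr : ((innW T k tt : ↥(Wgrp T k)) : Wr T k).right = 1 := rfl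
    have hwl : ∀ i, ((innW T k tt : ↥(Wgrp T k)) : Wr T k).left i = phi T (tt i) :=
      fun i => rfl
    have hD2 := Subgroup.mem_subgroupOf.mp hfix2
    have hcomp : ∀ i, (((innW T k tt)⁻¹ * g * innW T k tt : ↥(Wgrp T k)) : Wr T k).left i
        = (phi T (tt i))⁻¹ * α * phi T (tt (π.symm i)) := by
      intro i
      have hcoe : (((innW T k tt)⁻¹ * g * innW T k tt : ↥(Wgrp T k)) : Wr T k)
          = ((innW T k tt : ↥(Wgrp T k)) : Wr T k)⁻¹ * (g : Wr T k)
            * ((innW T k tt : ↥(Wgrp T k)) : Wr T k) := rfl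
      rw [hcoe, DiagAux.conj_left _ _ hwr, hwl, hwl, hgleft]
    have hE : ∀ i j, (phi T (tt i))⁻¹ * α * phi T (tt (π.symm i))
        = (phi T (tt j))⁻¹ * α * phi T (tt (π.symm j)) := by
      intro i j
      rw [← hcomp i, ← hcomp j]
      exact hD2 i j
    have hcc : ∀ i j, tt i * (α (tt (π.symm i)))⁻¹ = tt j * (α (tt (π.symm j)))⁻¹ :=
      fun i j => DiagAux.key_eq hab' α _ _ _ _ (hE i j)
    set c := tt e1 * (α (tt (π.symm e1)))⁻¹ with hcdef
    have htc : ∀ i, tt (π i) = c * α (tt i) := by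
      intro i
      have h := hcc (π i) e1
      rw [Equiv.symm_apply_apply] at h
      rw [hcdef, ← h]
      group
    have hc1 : c = 1 := by
      set u := α.symm c⁻¹ with hu
      have hiff : ∀ i, tt (π i) = 1 ↔ tt i = u := by
        intro i
        rw [htc i]
        constructor
        · intro h
          have h2 := congrArg (fun z => c⁻¹ * z) h
          simp only [inv_mul_cancel_left, mul_one] at h2
          rw [hu, ← h2, MulEquiv.symm_apply_apply]
        · intro h
          rw [h, hu, MulEquiv.apply_symm_apply, mul_inv_cancel]
      set A := Finset.univ.filter (fun i => tt i = 1) with hA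
      set A' := Finset.univ.filter (fun i => tt i = u) with hA'
      have hAA' : A' = A.image π.symm := by
        ext i
        simp only [hA, hA', Finset.mem_image, Finset.mem_filter, Finset.mem_univ, true_and]
        constructor
        · intro h
          exact ⟨π i, (hiff i).mpr h, Equiv.symm_apply_apply _ _⟩
        · rintro ⟨j, hj, rfl⟩
          apply (hiff (π.symm j)).mp
          rw [Equiv.apply_symm_apply]
          exact hj
      have hcard' : A'.card = A.card := by
        rw [hAA', Finset.card_image_of_injective _ π.symm.injective]
      have hsub : Finset.univ \ P ⊆ A := by
        intro i hi
        rw [Finset.mem_sdiff] at hi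
        exact Finset.mem_filter.mpr ⟨Finset.mem_univ i, httnot i hi.2⟩
      have hAcard : 2 ≤ A.card := by
        have hsd : (Finset.univ \ P).card = k - P.card := by
          rw [Finset.card_sdiff_of_subset (Finset.subset_univ _), Finset.card_univ, Fintype.card_fin]
        have hle := Finset.card_le_card hsub
        have hPk' : P.card ≤ k := by
          have := Finset.card_le_univ P
          simpa [Finset.card_univ, Fintype.card_fin] using this
        omega
      have hu1 : u = 1 := by
        by_contra hune
        have hle1 : A'.card ≤ 1 := by
          rw [Finset.card_le_one]
          intro i hi j hj
          rw [hA', Finset.mem_filter] at hi hj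
          exact htinj i j (by rw [hi.2]; exact hune) (hi.2.trans hj.2.symm)
        omega
      have h2 : (α : T ≃* T) u = α 1 := congrArg _ hu1
      rw [hu, MulEquiv.apply_symm_apply, map_one] at h2
      exact inv_eq_one.mp h2
    have htα : ∀ i, tt (π i) = α (tt i) := by
      intro i
      rw [htc i, hc1, one_mul]
    have hαx : α x = x := by
      have h1 := htα (π.symm e1)
      rw [Equiv.apply_symm_apply, htt1] at h1
      have h2 : orderOf (tt (π.symm e1)) = orderOf x := by
        calc orderOf (tt (π.symm e1)) = orderOf (α (tt (π.symm e1))) :=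
              (MulEquiv.orderOf_eq α _).symm
          _ = orderOf x := by rw [← h1]
      have h3 := horder _ h2
      rw [h3, htt1] at h1
      exact h1.symm
    have hαy : α y = y := by
      have h1 := htα (π.symm e2)
      rw [Equiv.apply_symm_apply, htt2] at h1
      have h2 : orderOf (tt (π.symm e2)) = orderOf y := by
        calc orderOf (tt (π.symm e2)) = orderOf (α (tt (π.symm e2))) :=
              (MulEquiv.orderOf_eq α _).symm
          _ = orderOf y := by rw [← h1]
      have h3 := horder' _ h2
      rw [h3, htt2] at h1
      exact h1.symm
    have hα1 : α = 1 := by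
      have heq : Set.EqOn (MulEquiv.toMonoidHom (α : T ≃* T)) (MonoidHom.id T)
          ({x, y} : Set T) := by
        rintro z (rfl | rfl)
        · exact hαx
        · exact hαy
      have h2 := MonoidHom.eqOn_closure heq
      rw [hgen] at h2
      ext z
      exact h2 (by simp)
    have hπ1 : π = 1 := by
      apply hPbase π
      · exact Subgroup.mem_map.mpr ⟨g, hgG, rfl⟩
      · intro i hi
        have h1 := htα i
        rw [hα1] at h1
        simp only [MulAut.one_apply] at h1
        exact htinj (π i) i (by rw [h1]; exact httprop i hi) h1
    have hgval : (g : Wr T k) = 1 := by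
      refine SemidirectProduct.ext ?_ ?_
      · funext i
        rw [hgleft i, hα1]
        rfl
      · exact hπ1
    exact Subtype.ext hgval
  -- conclude
  have h2S : (2 : ℕ) ∈ {n | ∃ B : Finset (Om T k), B.card = n ∧ IsBase T k G ↑B} :=
    ⟨{pt T k, pointOf T k tt}, Finset.card_pair hptne, hBbase⟩
  unfold baseSize
  refine le_antisymm (Nat.sInf_le h2S) ?_
  obtain ⟨B, hBc, hBb⟩ := Nat.sInf_mem (⟨2, h2S⟩ :
    {n | ∃ B : Finset (Om T k), B.card = n ∧ IsBase T k G ↑B}.Nonempty)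
  exact hBc ▸ hS0 B hBb
end

section
/- Let G be a group of diagonal type with socle T^k whose top group P_G contains A_k. If there exists an odd integer s with 1 < s ≤ k such that s is relatively prime to the order of every element of Out(T), then G contains the subgroup Inn(T)^k ⋊ A_k of W(k,T). -/
open Diag


namespace Diag

variable (T : Type) [Group T] (k : ℕ)

/-- Auxiliary: the projection `W(k,T) → S_k`. -/
def rpr : ↥(Wgrp T k) →* Equiv.Perm (Fin k) :=
  (SemidirectProduct.rightHom).comp (Wgrp T k).subtype

lemma mem_wgrp_aux (w : ↥(Wgrp T k)) (i j : Fin k) :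
    ((w : Wr T k).left i)⁻¹ * (w : Wr T k).left j ∈ Inn T := w.2 i j

lemma mk_left_eq (w : ↥(Wgrp T k)) (i j : Fin k) :
    (QuotientGroup.mk ((w : Wr T k).left i) : MulAut T ⧸ Inn T)
      = QuotientGroup.mk ((w : Wr T k).left j) :=
  (QuotientGroup.eq).mpr (mem_wgrp_aux T k w i j)

/-- Auxiliary: the "outer part" homomorphism `W(k,T) → Out(T)`. -/
def outHom (hk : 0 < k) : ↥(Wgrp T k) →* MulAut T ⧸ Inn T where
  toFun w := QuotientGroup.mk ((w : Wr T k).left ⟨0, hk⟩)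
  map_one' := by
    show (QuotientGroup.mk (((1 : ↥(Wgrp T k)) : Wr T k).left ⟨0, hk⟩) : MulAut T ⧸ Inn T) = 1
    have : ((1 : ↥(Wgrp T k)) : Wr T k).left ⟨0, hk⟩ = 1 := rfl
    rw [this, QuotientGroup.mk_one]
  map_mul' w v := by
    show (QuotientGroup.mk (((w * v : ↥(Wgrp T k)) : Wr T k).left ⟨0, hk⟩) : MulAut T ⧸ Inn T)
      = QuotientGroup.mk ((w : Wr T k).left ⟨0, hk⟩)
        * QuotientGroup.mk ((v : Wr T k).left ⟨0, hk⟩)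
    have h1 : ((w * v : ↥(Wgrp T k)) : Wr T k).left ⟨0, hk⟩
        = (w : Wr T k).left ⟨0, hk⟩
          * (v : Wr T k).left ((w : Wr T k).right.symm ⟨0, hk⟩) := rfl
    rw [h1, QuotientGroup.mk_mul]
    exact congrArg (fun z => _ * z) (mk_left_eq T k v _ _)

lemma mem_innSym_iff (hk : 0 < k) (w : ↥(Wgrp T k)) :
    w ∈ InnSym T k ↔ outHom T k hk w = 1 := by
  constructor
  · intro hw
    exact (QuotientGroup.eq_one_iff _).mpr (hw ⟨0, hk⟩)
  · intro hw i
    have h0 : (w : Wr T k).left ⟨0, hk⟩ ∈ Inn T := (QuotientGroup.eq_one_iff _).mp hw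
    have : (w : Wr T k).left i
        = (w : Wr T k).left ⟨0, hk⟩
          * (((w : Wr T k).left ⟨0, hk⟩)⁻¹ * (w : Wr T k).left i) := by group
    rw [this]
    exact mul_mem h0 (mem_wgrp_aux T k w _ _)

end Diag

/-- **Lemma (`A_k` inside `G`).** Suppose the top group of a diagonal type group `G`
contains `A_k`.  If there is an odd integer `s` with `1 < s ≤ k` such that `s` is
relatively prime to the order of every element of `Out(T)`, then
`Inn(T)^k ⋊ A_k ≤ G`. -/
theorem innAlt_le_of_coprime_odd
    (T : Type) [Group T] [Fintype T] [IsSimpleGroup T]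
    (hab : ∃ a b : T, a * b ≠ b * a)
    (k : ℕ) (hk : 2 ≤ k)
    (G : Subgroup ↥(Wgrp T k)) (hG : IsDiagonalType T k G)
    (hA : alternatingGroup (Fin k) ≤ topGroup T k G)
    (s : ℕ) (hodd : Odd s) (hs1 : 1 < s) (hsk : s ≤ k)
    (hco : ∀ β : MulAut T ⧸ Inn T, Nat.Coprime s (orderOf β)) :
    InnAlt T k ≤ G := by
  classical
  have hs3 : 3 ≤ s := by obtain ⟨c, rfl⟩ := hodd; omega
  obtain ⟨m, rfl⟩ : ∃ m, k = m + 3 := ⟨k - 3, by omega⟩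
  haveI : Finite (MulAut T) :=
    Finite.of_injective (fun (e : MulAut T) => (e : T → T)) DFunLike.coe_injective
  haveI : Finite (MulAut T ⧸ Inn T) :=
    Finite.of_surjective (QuotientGroup.mk : MulAut T → MulAut T ⧸ Inn T)
      QuotientGroup.mk_surjective
  have hk0 : 0 < m + 3 := by omega
  set q := outHom T (m + 3) hk0 with hq
  -- Key step: every element annihilated by `s` is the permutation part of an
  -- element of `G` all of whose coordinates are inner.
  have key : ∀ π : Equiv.Perm (Fin (m + 3)), π ^ s = 1 →
      π ∈ Subgroup.map (rpr T (m + 3)) (G ⊓ InnSym T (m + 3)) := by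
    intro π hπ
    have hsign : π ∈ alternatingGroup (Fin (m + 3)) := by
      rw [Equiv.Perm.mem_alternatingGroup]
      have h1 : (Equiv.Perm.sign π) ^ s = 1 := by rw [← map_pow, hπ, map_one]
      rcases Int.units_eq_one_or (Equiv.Perm.sign π) with h | h
      · exact h
      · rw [h, hodd.neg_one_pow] at h1
        exact absurd h1 (by decide)
    obtain ⟨g, hgG, hgr⟩ := Subgroup.mem_map.mp (hA hsign)
    set n := orderOf (q g) with hn
    have hnpos : 0 < n := orderOf_pos (q g)
    have hcop : Nat.Coprime n s := (hco (q g)).symm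
    have htot : 0 < Nat.totient s := Nat.totient_pos.mpr (by omega)
    refine Subgroup.mem_map.mpr ⟨g ^ (n ^ Nat.totient s), Subgroup.mem_inf.mpr ⟨?_, ?_⟩, ?_⟩
    · exact pow_mem hgG _
    · rw [mem_innSym_iff T (m + 3) hk0, ← hq, map_pow]
      have hsplit : n ^ Nat.totient s = n * n ^ (Nat.totient s - 1) := by
        rw [← pow_succ']
        congr 1
        omega
      rw [hsplit, pow_mul, hn, pow_orderOf_eq_one, one_pow]
    · have h2 : rpr T (m + 3) (g ^ (n ^ Nat.totient s)) = π ^ (n ^ Nat.totient s) := by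
        rw [map_pow]
        exact congrArg (fun z => z ^ (n ^ Nat.totient s)) hgr
      rw [h2, pow_eq_pow_mod _ hπ]
      have hmod : n ^ Nat.totient s % s = 1 := by
        have := Nat.ModEq.pow_totient hcop
        unfold Nat.ModEq at this
        rwa [Nat.mod_eq_of_lt hs1] at this
      rw [hmod, pow_one]
  -- The alternating group is contained in the image of `G ⊓ InnSym`.
  have hA_le : alternatingGroup (Fin (m + 3))
      ≤ Subgroup.map (rpr T (m + 3)) (G ⊓ InnSym T (m + 3)) := by
    rw [← Equiv.Perm.closure_three_cycles_eq_alternating]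
    refine (Subgroup.closure_le _).mpr ?_
    intro t ht
    -- an explicit `s`-cycle
    set i : Fin (m + 3) := ⟨s - 1, by omega⟩ with hi
    set σ := Fin.cycleRange i with hσ
    have hi0 : i ≠ 0 := by
      simp only [hi, Ne, Fin.ext_iff, Fin.val_zero]
      omega
    have hσord : orderOf σ = s := by
      rw [← Equiv.Perm.lcm_cycleType, Fin.cycleType_cycleRange hi0,
        Multiset.lcm_singleton, normalize_eq]
      show (s - 1) + 1 = s
      omega
    have hσs : σ ^ s = 1 := by rw [← hσord]; exact pow_orderOf_eq_one σ
    have hv1 : ((1 : Fin (m + 3)) : ℕ) = 1 := rfl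
    have h0lt : (0 : Fin (m + 3)) < i := by
      rw [Fin.lt_def]
      simp only [Fin.val_zero, hi]
      omega
    have h1lt : (1 : Fin (m + 3)) < i := by
      rw [Fin.lt_def, hv1]
      simp only [hi]
      omega
    have hσ0 : σ 0 = 1 := by
      rw [hσ, Fin.cycleRange_of_lt h0lt, zero_add]
    have hσ1 : σ 1 = 1 + 1 := by
      rw [hσ, Fin.cycleRange_of_lt h1lt]
    have hv2 : (((1 : Fin (m + 3)) + 1 : Fin (m + 3)) : ℕ) = 2 := by
      rw [Fin.val_add, hv1]
      exact Nat.mod_eq_of_lt (by omega)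
    have hne01 : (0 : Fin (m + 3)) ≠ 1 := by
      simp [Fin.ext_iff]
    have hne12 : (1 : Fin (m + 3)) ≠ 1 + 1 := by
      simp only [Ne, Fin.ext_iff, hv1, hv2]
      omega
    have hne02 : ((1 : Fin (m + 3)) + 1 : Fin (m + 3)) ≠ 0 := by
      simp only [Ne, Fin.ext_iff, hv2, Fin.val_zero]
      omega
    -- a specific three-cycle written as a product of two elements killed by `s`
    set b := Equiv.swap (0 : Fin (m + 3)) 1 * σ⁻¹ * Equiv.swap (0 : Fin (m + 3)) 1 with hb
    have hbs : b ^ s = 1 := by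
      have hswinv : Equiv.swap (0 : Fin (m + 3)) 1 = (Equiv.swap (0 : Fin (m + 3)) 1)⁻¹ :=
        (Equiv.swap_inv _ _).symm
      rw [hb]
      nth_rewrite 2 [hswinv]
      rw [conj_pow, inv_pow, hσs, inv_one, mul_one, mul_inv_cancel]
    have ht0 : σ * b = Equiv.swap (σ 0) (σ 1) * Equiv.swap 0 1 := by
      rw [Equiv.swap_apply_apply, hb]
      group
    have ht0three : Equiv.Perm.IsThreeCycle (σ * b) := by
      rw [ht0, hσ0, hσ1, Equiv.swap_comm 0 1]
      exact Equiv.Perm.isThreeCycle_swap_mul_swap_same hne12 hne01.symm hne02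
    -- conjugate it onto `t`
    have hconj : IsConj (σ * b) t :=
      Equiv.Perm.isConj_of_cycleType_eq (by rw [ht0three.cycleType, ht.cycleType])
    obtain ⟨c, hc⟩ := isConj_iff.mp hconj
    have hdecomp : t = (c * σ * c⁻¹) * (c * b * c⁻¹) := by
      rw [← hc]; group
    rw [hdecomp]
    refine mul_mem (key _ ?_) (key _ ?_)
    · rw [conj_pow, hσs, mul_one, mul_inv_cancel]
    · rw [conj_pow, hbs, mul_one, mul_inv_cancel]
  -- Conclusion.
  intro h hh
  rw [InnAlt, Subgroup.mem_inf] at hh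
  obtain ⟨hh1, hh2⟩ := hh
  rw [Subgroup.mem_comap] at hh2
  obtain ⟨g, hg, hgr⟩ := Subgroup.mem_map.mp (hA_le hh2)
  rw [Subgroup.mem_inf] at hg
  have hmem : h * g⁻¹ ∈ InnK T (m + 3) := by
    rw [InnK, Subgroup.mem_inf]
    refine ⟨mul_mem hh1 (inv_mem hg.2), ?_⟩
    rw [Subgroup.mem_comap, Subgroup.mem_bot, map_mul, map_inv]
    have : ((SemidirectProduct.rightHom).comp (Wgrp T (m + 3)).subtype) g
        = ((SemidirectProduct.rightHom).comp (Wgrp T (m + 3)).subtype) h := hgr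
    rw [this, mul_inv_cancel]
  have := mul_mem (hG.1 hmem) hg.1
  rwa [inv_mul_cancel_right] at this
end
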